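/- For each open content type θ there is a SHACL shape φ_θ such that for every common graph G = (E,ρ) and every node v ∈ Nodes(G): G,v ⊨ φ_θ if and only if ρ(v) ∈ ⟦θ⟧. -/
import Mathlib


/-! ### Common graphs -/

/-- Nodes. -/
abbrev GNode := ℕ
/-- Values. -/
abbrev GValue := ℕ
/-- Predicates. -/
abbrev GPred := ℕ
/-- Keys. -/
abbrev GKey := ℕ

/-- Nodes or values (the disjoint union 𝒩 ∪ 𝒱). -/
abbrev NV := GNode ⊕ GValue
/-- Predicates or keys (the disjoint union 𝒫 ∪ 𝒦). -/
abbrev PK := GPred ⊕ GKey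

/-- Triples of a common graph: edges (𝒩×𝒫×𝒩) and properties (𝒩×𝒦×𝒱). -/
inductive Triple : Type
  | edge (u : GNode) (p : GPred) (v : GNode)
  | prop (u : GNode) (k : GKey) (w : GValue)
  deriving DecidableEq

/-- A common graph: a finite set of triples such that for each node `u` and key `k`
there is at most one value `w` with `(u,k,w)` in the graph. -/
structure CommonGraph : Type where
  triples : Finset Triple
  functional : ∀ u k w w', Triple.prop u k w ∈ triples → Triple.prop u k w' ∈ triples → w = w'

/-- `(v, q, u) ∈ G`, viewed as a binary relation on `𝒩 ∪ 𝒱` for each `q ∈ 𝒫 ∪ 𝒦`. -/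
def tripleRel (G : CommonGraph) : PK → NV → NV → Prop
  | Sum.inl p, Sum.inl u, Sum.inl v => Triple.edge u p v ∈ G.triples
  | Sum.inr k, Sum.inl u, Sum.inr w => Triple.prop u k w ∈ G.triples
  | _, _, _ => False

/-- The nodes occurring in a common graph. -/
def nodesSet (G : CommonGraph) : Set GNode :=
  {u | (∃ p v, Triple.edge u p v ∈ G.triples) ∨ (∃ p v, Triple.edge v p u ∈ G.triples) ∨
       (∃ k w, Triple.prop u k w ∈ G.triples)}

/-- The values occurring in a common graph. -/
def valuesSet (G : CommonGraph) : Set GValue :=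
  {w | ∃ u k, Triple.prop u k w ∈ G.triples}

/-- `v ∈ Nodes(G) ∪ Values(G)`. -/
def inGraph (G : CommonGraph) : NV → Prop
  | Sum.inl u => u ∈ nodesSet G
  | Sum.inr w => w ∈ valuesSet G

/-- The content `ρ(u)` of a node: the record `{(k,w) | ρ(u,k) = w}`. -/
def content (G : CommonGraph) (u : GNode) : Set (GKey × GValue) :=
  {kw | Triple.prop u kw.1 kw.2 ∈ G.triples}

/-! ### Records and content types -/

/-- A record: a functional, finite set of key–value pairs
(a finite-domain partial function `𝒦 ⇀ 𝒱`). -/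
def IsRecord (r : Set (GKey × GValue)) : Prop :=
  r.Finite ∧ ∀ k w w', (k, w) ∈ r → (k, w') ∈ r → w = w'

/-- Content types `θ ::= ⊤ | {} | {k:τ} | θ&θ | θ|θ`. -/
inductive CType (VT : Type) : Type
  | top
  | emp
  | single (k : GKey) (τ : VT)
  | band (θ₁ θ₂ : CType VT)
  | bor (θ₁ θ₂ : CType VT)

/-- The semantics `⟦θ⟧` of a content type: a set of records. -/
def ctSem {VT : Type} (semVT : VT → Set GValue) : CType VT → Set (Set (GKey × GValue))
  | .top => {r | IsRecord r}
  | .emp => {(∅ : Set (GKey × GValue))}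
  | .single k τ => {r | ∃ w ∈ semVT τ, r = {(k, w)}}
  | .band θ₁ θ₂ => {r | IsRecord r ∧ ∃ r₁ ∈ ctSem semVT θ₁, ∃ r₂ ∈ ctSem semVT θ₂, r = r₁ ∪ r₂}
  | .bor θ₁ θ₂ => ctSem semVT θ₁ ∪ ctSem semVT θ₂

/-- Closed content types `ν ::= {} | {k:τ} | ν&ν | ν|ν`. -/
inductive CCType (VT : Type) : Type
  | emp
  | single (k : GKey) (τ : VT)
  | band (ν₁ ν₂ : CCType VT)
  | bor (ν₁ ν₂ : CCType VT)

/-- A closed content type is in particular a content type. -/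
def CCType.toCT {VT : Type} : CCType VT → CType VT
  | .emp => .emp
  | .single k τ => .single k τ
  | .band ν₁ ν₂ => .band ν₁.toCT ν₂.toCT
  | .bor ν₁ ν₂ => .bor ν₁.toCT ν₂.toCT

/-- Open content types: `⊤` or `ν & ⊤` with `ν` closed. -/
inductive OpenCT (VT : Type) : Type
  | top
  | opn (ν : CCType VT)

/-- An open content type as a content type. -/
def OpenCT.toCT {VT : Type} : OpenCT VT → CType VT
  | .top => .top
  | .opn ν => .band ν.toCT .top

/-! ### SHACL -/

/-- SHACL path expressions `π ::= id | q | π⁻ | π·π | π∪π | π*`. -/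
inductive SPath : Type
  | id
  | sym (q : PK)
  | inv (π : SPath)
  | comp (π₁ π₂ : SPath)
  | union (π₁ π₂ : SPath)
  | star (π : SPath)

/-- The semantics `⟦π⟧^G ⊆ (𝒩∪𝒱)²` of a SHACL path expression. -/
def spathSem (G : CommonGraph) : SPath → NV → NV → Prop
  | .id => fun a b => a = b
  | .sym q => tripleRel G q
  | .inv π => fun a b => spathSem G π b a
  | .comp π₁ π₂ => fun a b => ∃ c, spathSem G π₁ a c ∧ spathSem G π₂ c b
  | .union π₁ π₂ => fun a b => spathSem G π₁ a b ∨ spathSem G π₂ a b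
  | .star π => Relation.ReflTransGen (spathSem G π)

/-- SHACL shapes. -/
inductive SShape (VT : Type) : Type
  | top
  | testC (c : GValue)
  | testT (τ : VT)
  | closed (Q : Finset PK)
  | eq (π : SPath) (p : GPred)
  | disj (π : SPath) (p : GPred)
  | not (φ : SShape VT)
  | and (φ₁ φ₂ : SShape VT)
  | or (φ₁ φ₂ : SShape VT)
  | geq (n : ℕ) (π : SPath) (φ : SShape VT)
  | leq (n : ℕ) (π : SPath) (φ : SShape VT)

/-- Satisfaction of SHACL shapes: `G, v ⊨ φ`. -/
def shaclSat {VT : Type} (semVT : VT → Set GValue) (G : CommonGraph) : NV → SShape VT → Prop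
  | _, .top => True
  | v, .testC c => v = Sum.inr c
  | v, .testT τ => ∃ w, v = Sum.inr w ∧ w ∈ semVT τ
  | v, .closed Q => ∀ q : PK, q ∉ Q → ∀ u, ¬ tripleRel G q v u
  | v, .eq π p => {u : NV | spathSem G π v u} = {u : NV | tripleRel G (Sum.inl p) v u}
  | v, .disj π p => {u : NV | spathSem G π v u} ∩ {u : NV | tripleRel G (Sum.inl p) v u} = ∅
  | v, .not φ => ¬ shaclSat semVT G v φ
  | v, .and φ₁ φ₂ => shaclSat semVT G v φ₁ ∧ shaclSat semVT G v φ₂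
  | v, .or φ₁ φ₂ => shaclSat semVT G v φ₁ ∨ shaclSat semVT G v φ₂
  | v, .geq n π φ => (n : ℕ∞) ≤ {u : NV | spathSem G π v u ∧ shaclSat semVT G u φ}.encard
  | v, .leq n π φ => {u : NV | spathSem G π v u ∧ shaclSat semVT G u φ}.encard ≤ (n : ℕ∞)

/-- SHACL selectors: `∃^{≥1}q.⊤`, `∃^{≥1}q⁻.⊤`, or `test(c)`. -/
def IsSHACLSelector {VT : Type} (φ : SShape VT) : Prop :=
  (∃ q : PK, φ = SShape.geq 1 (SPath.sym q) SShape.top) ∨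
  (∃ q : PK, φ = SShape.geq 1 (SPath.inv (SPath.sym q)) SShape.top) ∨
  (∃ c : GValue, φ = SShape.testC c)

/-- A SHACL schema: a finite set of selector–shape pairs. -/
structure SHACLSchema (VT : Type) : Type where
  pairs : Finset (SShape VT × SShape VT)
  sel : ∀ pr ∈ pairs, IsSHACLSelector pr.1

/-- Validity of a common graph w.r.t. a SHACL schema. -/
def shaclValid {VT : Type} (semVT : VT → Set GValue) (S : SHACLSchema VT) (G : CommonGraph) : Prop :=
  ∀ v : NV, ∀ pr ∈ S.pairs, shaclSat semVT G v pr.1 → shaclSat semVT G v pr.2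

/-- The content of any node is a record. -/
lemma content_isRecord (G : CommonGraph) (v : GNode) : IsRecord (content G v) := by
  constructor
  · have : content G v ⊆ (fun t : Triple => match t with
        | .prop _ k w => (k, w)
        | .edge _ _ _ => (0, 0)) '' (G.triples : Set Triple) := by
      rintro ⟨k, w⟩ h
      exact ⟨Triple.prop v k w, h, rfl⟩
    exact Set.Finite.subset ((G.triples : Set Triple).toFinite.image _) this
  · intro k w w' h h'
    exact G.functional v k w w' h h'

/-- Every element of the semantics of a content type is a record. -/
lemma ctSem_isRecord {VT : Type} (semVT : VT → Set GValue) :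
    ∀ θ : CType VT, ∀ r ∈ ctSem semVT θ, IsRecord r := by
  intro θ
  induction θ with
  | top => intro r hr; exact hr
  | emp =>
      intro r hr
      simp only [ctSem, Set.mem_singleton_iff] at hr
      subst hr
      exact ⟨Set.finite_empty, by simp⟩
  | single k τ =>
      rintro r ⟨w, _, rfl⟩
      exact ⟨Set.finite_singleton _, by
        rintro k' w₁ w₂ h₁ h₂
        simp only [Set.mem_singleton_iff, Prod.mk.injEq] at h₁ h₂
        rw [h₁.2, h₂.2]⟩
  | band θ₁ θ₂ ih₁ ih₂ => rintro r ⟨hr, _⟩; exact hr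
  | bor θ₁ θ₂ ih₁ ih₂ =>
      rintro r (hr | hr)
      · exact ih₁ r hr
      · exact ih₂ r hr

/-- Shape corresponding to a closed content type. -/
def ccShape {VT : Type} : CCType VT → SShape VT
  | .emp => .top
  | .single k τ => .geq 1 (.sym (Sum.inr k)) (.testT τ)
  | .band ν₁ ν₂ => .and (ccShape ν₁) (ccShape ν₂)
  | .bor ν₁ ν₂ => .or (ccShape ν₁) (ccShape ν₂)

lemma ccShape_correct {VT : Type} (semVT : VT → Set GValue) (ν : CCType VT)
    (G : CommonGraph) (v : GNode) :
    shaclSat semVT G (Sum.inl v) (ccShape ν) ↔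
      ∃ r ∈ ctSem semVT ν.toCT, r ⊆ content G v := by
  induction ν with
  | emp =>
      simp only [ccShape, CCType.toCT, shaclSat, ctSem]
      constructor
      · intro _
        exact ⟨∅, rfl, Set.empty_subset _⟩
      · intro _; trivial
  | single k τ =>
      simp only [ccShape, CCType.toCT, shaclSat, ctSem]
      rw [show ((1 : ℕ) : ℕ∞) = 1 from rfl, Set.one_le_encard_iff_nonempty]
      constructor
      · rintro ⟨u, hrel, w, rfl, hw⟩
        refine ⟨{(k, w)}, ⟨w, hw, rfl⟩, ?_⟩
        intro kw hkw
        simp only [Set.mem_singleton_iff] at hkw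
        subst hkw
        exact hrel
      · rintro ⟨r, ⟨w, hw, rfl⟩, hsub⟩
        exact ⟨Sum.inr w, hsub rfl, w, rfl, hw⟩
  | band ν₁ ν₂ ih₁ ih₂ =>
      simp only [ccShape, CCType.toCT, shaclSat, ctSem, ih₁, ih₂]
      constructor
      · rintro ⟨⟨r₁, hr₁, hs₁⟩, ⟨r₂, hr₂, hs₂⟩⟩
        refine ⟨r₁ ∪ r₂, ⟨?_, r₁, hr₁, r₂, hr₂, rfl⟩, Set.union_subset hs₁ hs₂⟩
        constructor
        · exact Set.Finite.union (ctSem_isRecord semVT _ r₁ hr₁).1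
            (ctSem_isRecord semVT _ r₂ hr₂).1
        · intro k w w' h h'
          exact (content_isRecord G v).2 k w w'
            (Set.union_subset hs₁ hs₂ h) (Set.union_subset hs₁ hs₂ h')
      · rintro ⟨r, ⟨_, r₁, hr₁, r₂, hr₂, rfl⟩, hsub⟩
        exact ⟨⟨r₁, hr₁, (Set.subset_union_left).trans hsub⟩,
          ⟨r₂, hr₂, (Set.subset_union_right).trans hsub⟩⟩
  | bor ν₁ ν₂ ih₁ ih₂ =>
      simp only [ccShape, CCType.toCT, shaclSat, ctSem, ih₁, ih₂]
      constructor
      · rintro (⟨r, hr, hs⟩ | ⟨r, hr, hs⟩)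
        · exact ⟨r, Or.inl hr, hs⟩
        · exact ⟨r, Or.inr hr, hs⟩
      · rintro ⟨r, hr | hr, hs⟩
        · exact Or.inl ⟨r, hr, hs⟩
        · exact Or.inr ⟨r, hr, hs⟩

/-- For each open content type `θ` there is a SHACL shape `φ_θ` such that
for every common graph `G` and node `v` of `G`: `G, v ⊨ φ_θ` iff `ρ(v) ∈ ⟦θ⟧`. -/
theorem open_content_type_expressible_in_shacl
    (VT : Type) (semVT : VT → Set GValue) (θ : OpenCT VT) :
    ∃ φ : SShape VT, ∀ (G : CommonGraph) (v : GNode), v ∈ nodesSet G →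
      (shaclSat semVT G (Sum.inl v) φ ↔ content G v ∈ ctSem semVT θ.toCT) := by
  cases θ with
  | top =>
      refine ⟨.top, fun G v _ => ?_⟩
      simp only [OpenCT.toCT, ctSem, shaclSat]
      exact ⟨fun _ => content_isRecord G v, fun _ => trivial⟩
  | opn ν =>
      refine ⟨ccShape ν, fun G v _ => ?_⟩
      rw [ccShape_correct]
      simp only [OpenCT.toCT, ctSem]
      constructor
      · rintro ⟨r, hr, hsub⟩
        exact ⟨content_isRecord G v, r, hr, content G v, content_isRecord G v,
          (Set.union_eq_right.mpr hsub).symm⟩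
      · rintro ⟨_, r₁, hr₁, r₂, _, heq⟩
        exact ⟨r₁, hr₁, heq ▸ Set.subset_union_left⟩
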